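/- For every cluster s ∈ Σ, the cluster s is coloured black if and only if |s ∩ R₁| and |s ∩ R₂| are both even; in particular every black cluster has even cardinality. -/

import Mathlib

/-- Colours of roots and clusters. -/
inductive Colour : Type
  | red | blue | purple | black
deriving DecidableEq

/-- A cluster picture on a finite set `R`: a collection of nonempty subsets of `R`
containing `R` and all singletons, any two of which are nested or disjoint. -/
def IsClusterPicture {α : Type*} [DecidableEq α] (R : Finset α) (CP : Set (Finset α)) : Prop :=
  (∀ s ∈ CP, s.Nonempty ∧ s ⊆ R) ∧ R ∈ CP ∧ (∀ r ∈ R, ({r} : Finset α) ∈ CP) ∧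
    ∀ s ∈ CP, ∀ t ∈ CP, s ⊆ t ∨ t ⊆ s ∨ s ∩ t = ∅

/-- `t` is a child of `s`: a maximal cluster properly contained in `s`. -/
def IsChildOf {α : Type*} [DecidableEq α] (CP : Set (Finset α)) (t s : Finset α) : Prop :=
  t ∈ CP ∧ t ⊂ s ∧ ∀ u ∈ CP, u ⊂ s → t ⊆ u → u = t

/-- The number of children of `s` coloured red or purple. -/
noncomputable def aCount {α : Type*} [DecidableEq α] (CP : Set (Finset α)) (col : Finset α → Colour)
    (s : Finset α) : ℕ :=
  Set.ncard {t : Finset α | IsChildOf CP t s ∧ (col t = Colour.red ∨ col t = Colour.purple)}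

/-- The number of children of `s` coloured blue or purple. -/
noncomputable def bCount {α : Type*} [DecidableEq α] (CP : Set (Finset α)) (col : Finset α → Colour)
    (s : Finset α) : ℕ :=
  Set.ncard {t : Finset α | IsChildOf CP t s ∧ (col t = Colour.blue ∨ col t = Colour.purple)}

/-- `col` is the recursive colouring of the clusters of the cluster picture `CP`
induced by the colouring `c` of the roots. -/
def IsColouring {α : Type*} [DecidableEq α] (R : Finset α) (CP : Set (Finset α))
    (c : α → Colour) (col : Finset α → Colour) : Prop :=
  (∀ r ∈ R, col {r} = c r) ∧
    ∀ s ∈ CP, 2 ≤ s.card →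
      ((Odd (aCount CP col s) ∧ Even (bCount CP col s)) → col s = Colour.red) ∧
      ((Odd (bCount CP col s) ∧ Even (aCount CP col s)) → col s = Colour.blue) ∧
      ((Odd (aCount CP col s) ∧ Odd (bCount CP col s)) → col s = Colour.purple) ∧
      ((Even (aCount CP col s) ∧ Even (bCount CP col s)) → col s = Colour.black)

/-- A cluster is chromatic if it is red, blue or purple. -/
def Chromatic {β : Type*} (col : β → Colour) (t : β) : Prop :=
  col t = Colour.red ∨ col t = Colour.blue ∨ col t = Colour.purple

lemma child_exists {α : Type*} [DecidableEq α] {R : Finset α} {CP : Set (Finset α)}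
    (hCP : IsClusterPicture R CP) {s : Finset α} (hs : s ∈ CP) (h2 : 2 ≤ s.card)
    {r : α} (hr : r ∈ s) : ∃ t, IsChildOf CP t s ∧ r ∈ t := by
  obtain ⟨hne, hRmem, hsing, hnest⟩ := hCP
  have hsR : s ⊆ R := (hne s hs).2
  set U : Set (Finset α) := {u | u ∈ CP ∧ u ⊂ s ∧ r ∈ u} with hU
  have hUfin : U.Finite := by
    apply Set.Finite.subset (Finset.finite_toSet s.powerset)
    intro u hu
    simp only [Finset.coe_powerset, Set.mem_preimage, Set.mem_powerset_iff, Finset.coe_subset]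
    exact hu.2.1.subset
  have hUne : ({r} : Finset α) ∈ U := by
    refine ⟨hsing r (hsR hr), ?_, Finset.mem_singleton_self r⟩
    rw [Finset.ssubset_iff_subset_ne]
    refine ⟨by simpa using hr, ?_⟩
    intro h
    rw [← h] at h2
    simp at h2
  obtain ⟨t, htU, htmax⟩ := Set.Finite.exists_maximalFor Finset.card U hUfin ⟨_, hUne⟩
  refine ⟨t, ⟨htU.1, htU.2.1, ?_⟩, htU.2.2⟩
  intro u hu hus htu
  have huU : u ∈ U := ⟨hu, hus, htu htU.2.2⟩
  have hcard := htmax huU (Finset.card_le_card htu)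
  exact (Finset.eq_of_subset_of_card_le htu hcard).symm

lemma child_disjoint {α : Type*} [DecidableEq α] {R : Finset α} {CP : Set (Finset α)}
    (hCP : IsClusterPicture R CP) {s t₁ t₂ : Finset α}
    (h1 : IsChildOf CP t₁ s) (h2 : IsChildOf CP t₂ s) (hne : t₁ ≠ t₂) : t₁ ∩ t₂ = ∅ := by
  rcases hCP.2.2.2 t₁ h1.1 t₂ h2.1 with h | h | h
  · exact absurd (h1.2.2 t₂ h2.1 h2.2.1 h) hne.symm
  · exact absurd (h2.2.2 t₁ h1.1 h1.2.1 h) hne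
  · exact h

lemma cluster_key {α : Type*} [DecidableEq α] (R : Finset α)
    (c : α → Colour) (hc : ∀ r ∈ R, c r = Colour.red ∨ c r = Colour.blue)
    (CP : Set (Finset α)) (hCP : IsClusterPicture R CP)
    (col : Finset α → Colour) (hcol : IsColouring R CP c col) :
    ∀ n : ℕ, ∀ s ∈ CP, s.card ≤ n →
      (Odd (s ∩ R.filter (fun r => c r = Colour.red)).card ↔
        col s = Colour.red ∨ col s = Colour.purple) ∧
      (Odd (s ∩ R.filter (fun r => c r = Colour.blue)).card ↔
        col s = Colour.blue ∨ col s = Colour.purple) := by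
  intro n
  induction n with
  | zero =>
    intro s hs h
    have hne := (hCP.1 s hs).1
    rw [Nat.le_zero, Finset.card_eq_zero] at h
    exact absurd h (Finset.nonempty_iff_ne_empty.mp hne)
  | succ n ih =>
    intro s hs hcard
    rcases lt_or_ge s.card 2 with hlt | h2
    · -- singleton case
      have hne := (hCP.1 s hs).1
      have h1 : s.card = 1 := le_antisymm (by omega) (Finset.one_le_card.mpr hne)
      obtain ⟨r, rfl⟩ := Finset.card_eq_one.mp h1
      have hrR : r ∈ R := (hCP.1 _ hs).2 (Finset.mem_singleton_self r)
      have hcolr : col {r} = c r := hcol.1 r hrR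
      rcases hc r hrR with h | h
      · have e1 : ({r} : Finset α) ∩ R.filter (fun x => c x = Colour.red) = {r} := by
          ext x
          simp only [Finset.mem_inter, Finset.mem_singleton, Finset.mem_filter]
          exact ⟨fun hx => hx.1, fun hx => ⟨hx, hx ▸ ⟨hrR, h⟩⟩⟩
        have e2 : ({r} : Finset α) ∩ R.filter (fun x => c x = Colour.blue) = ∅ := by
          ext x
          simp only [Finset.mem_inter, Finset.mem_singleton, Finset.mem_filter,
            Finset.notMem_empty, iff_false]
          rintro ⟨rfl, _, hb⟩
          rw [h] at hb
          exact Colour.noConfusion hb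
        rw [hcolr, h, e1, e2]
        simp [Nat.odd_iff]
      · have e1 : ({r} : Finset α) ∩ R.filter (fun x => c x = Colour.red) = ∅ := by
          ext x
          simp only [Finset.mem_inter, Finset.mem_singleton, Finset.mem_filter,
            Finset.notMem_empty, iff_false]
          rintro ⟨rfl, _, hb⟩
          rw [h] at hb
          exact Colour.noConfusion hb
        have e2 : ({r} : Finset α) ∩ R.filter (fun x => c x = Colour.blue) = {r} := by
          ext x
          simp only [Finset.mem_inter, Finset.mem_singleton, Finset.mem_filter]
          exact ⟨fun hx => hx.1, fun hx => ⟨hx, hx ▸ ⟨hrR, h⟩⟩⟩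
        rw [hcolr, h, e1, e2]
        simp [Nat.odd_iff]
    · -- general case
      classical
      have hchfin : {t | IsChildOf CP t s}.Finite := by
        apply Set.Finite.subset (Finset.finite_toSet s.powerset)
        intro t ht
        simp only [Finset.coe_powerset, Set.mem_preimage, Set.mem_powerset_iff,
          Finset.coe_subset]
        exact ht.2.1.subset
      set C : Finset (Finset α) := hchfin.toFinset with hC
      have hmemC : ∀ t, t ∈ C ↔ IsChildOf CP t s := fun t => hchfin.mem_toFinset
      have hcover : ∀ X : Finset α, s ∩ X = C.biUnion (fun t => t ∩ X) := by
        intro X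
        ext x
        simp only [Finset.mem_inter, Finset.mem_biUnion]
        constructor
        · rintro ⟨hxs, hxX⟩
          obtain ⟨t, ht, hxt⟩ := child_exists hCP hs h2 hxs
          exact ⟨t, (hmemC t).2 ht, hxt, hxX⟩
        · rintro ⟨t, htC, hxt, hxX⟩
          exact ⟨((hmemC t).1 htC).2.1.subset hxt, hxX⟩
      have hdisj : ∀ X : Finset α, (s ∩ X).card = ∑ t ∈ C, (t ∩ X).card := by
        intro X
        rw [hcover X]
        apply Finset.card_biUnion
        intro t1 ht1 t2 ht2 hne12
        have hdj := child_disjoint hCP ((hmemC t1).1 ht1) ((hmemC t2).1 ht2) hne12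
        rw [Function.onFun, Finset.disjoint_left]
        intro a ha1 ha2
        have hmem : a ∈ t1 ∩ t2 :=
          Finset.mem_inter.mpr ⟨(Finset.mem_inter.mp ha1).1, (Finset.mem_inter.mp ha2).1⟩
        rw [hdj] at hmem
        exact absurd hmem (Finset.notMem_empty a)
      have hchild : ∀ t ∈ C,
          (Odd ((t ∩ R.filter (fun r => c r = Colour.red)).card) ↔
            col t = Colour.red ∨ col t = Colour.purple) ∧
          (Odd ((t ∩ R.filter (fun r => c r = Colour.blue)).card) ↔
            col t = Colour.blue ∨ col t = Colour.purple) := by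
        intro t htC
        have ht := (hmemC t).1 htC
        refine ih t ht.1 ?_
        have := Finset.card_lt_card ht.2.1
        omega
      have haC : aCount CP col s =
          (C.filter (fun t => col t = Colour.red ∨ col t = Colour.purple)).card := by
        rw [aCount, ← Set.ncard_coe_finset]
        congr 1
        ext t
        simp only [Finset.coe_filter, Set.mem_setOf_eq, hmemC]
      have hbC : bCount CP col s =
          (C.filter (fun t => col t = Colour.blue ∨ col t = Colour.purple)).card := by
        rw [bCount, ← Set.ncard_coe_finset]
        congr 1
        ext t
        simp only [Finset.coe_filter, Set.mem_setOf_eq, hmemC]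
      have ha : Odd (aCount CP col s) ↔
          Odd ((s ∩ R.filter (fun r => c r = Colour.red)).card) := by
        rw [haC, hdisj, Finset.odd_sum_iff_odd_card_odd]
        rw [Finset.filter_congr (fun t ht => ((hchild t ht).1).symm)]
      have hb : Odd (bCount CP col s) ↔
          Odd ((s ∩ R.filter (fun r => c r = Colour.blue)).card) := by
        rw [hbC, hdisj, Finset.odd_sum_iff_odd_card_odd]
        rw [Finset.filter_congr (fun t ht => ((hchild t ht).2).symm)]
      obtain ⟨h3, h4, h5, h6⟩ := hcol.2 s hs h2
      rcases Nat.even_or_odd (aCount CP col s) with hA | hA <;>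
        rcases Nat.even_or_odd (bCount CP col s) with hB | hB
      · have hcols := h6 ⟨hA, hB⟩
        exact ⟨by rw [← ha, hcols]; simp [Nat.not_odd_iff_even.mpr hA],
               by rw [← hb, hcols]; simp [Nat.not_odd_iff_even.mpr hB]⟩
      · have hcols := h4 ⟨hB, hA⟩
        exact ⟨by rw [← ha, hcols]; simp [Nat.not_odd_iff_even.mpr hA],
               by rw [← hb, hcols]; simp [hB]⟩
      · have hcols := h3 ⟨hA, hB⟩
        exact ⟨by rw [← ha, hcols]; simp [hA],
               by rw [← hb, hcols]; simp [Nat.not_odd_iff_even.mpr hB]⟩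
      · have hcols := h5 ⟨hA, hB⟩
        exact ⟨by rw [← ha, hcols]; simp [hA], by rw [← hb, hcols]; simp [hB]⟩

/-- A cluster is black iff it contains an even number of red roots and an even
number of blue roots; in particular every black cluster is even. -/
theorem cluster_black_iff {α : Type*} [DecidableEq α] (R : Finset α) (hR : R.Nonempty)
    (c : α → Colour) (hc : ∀ r ∈ R, c r = Colour.red ∨ c r = Colour.blue)
    (CP : Set (Finset α)) (hCP : IsClusterPicture R CP)
    (col : Finset α → Colour) (hcol : IsColouring R CP c col)
    (s : Finset α) (hs : s ∈ CP) :
    (col s = Colour.black ↔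
      Even (s ∩ R.filter (fun r => c r = Colour.red)).card ∧
        Even (s ∩ R.filter (fun r => c r = Colour.blue)).card) ∧
    (col s = Colour.black → Even s.card) := by
  obtain ⟨h1, h2⟩ := cluster_key R c hc CP hCP col hcol s.card s hs le_rfl
  have hiff : col s = Colour.black ↔
      Even (s ∩ R.filter (fun r => c r = Colour.red)).card ∧
        Even (s ∩ R.filter (fun r => c r = Colour.blue)).card := by
    constructor
    · intro hb
      refine ⟨Nat.not_odd_iff_even.mp ?_, Nat.not_odd_iff_even.mp ?_⟩
      · rw [h1, hb]; simp
      · rw [h2, hb]; simp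
    · rintro ⟨he1, he2⟩
      have hn1 : ¬(col s = Colour.red ∨ col s = Colour.purple) := by
        rw [← h1]; exact Nat.not_odd_iff_even.mpr he1
      have hn2 : ¬(col s = Colour.blue ∨ col s = Colour.purple) := by
        rw [← h2]; exact Nat.not_odd_iff_even.mpr he2
      rcases hcs : col s with _ | _ | _ | _
      · exact absurd (Or.inl hcs) hn1
      · exact absurd (Or.inl hcs) hn2
      · exact absurd (Or.inr hcs) hn1
      · rfl
  refine ⟨hiff, fun hb => ?_⟩
  obtain ⟨he1, he2⟩ := hiff.mp hb
  have hunion : (s ∩ R.filter (fun r => c r = Colour.red)) ∪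
      (s ∩ R.filter (fun r => c r = Colour.blue)) = s := by
    ext x
    simp only [Finset.mem_union, Finset.mem_inter, Finset.mem_filter]
    constructor
    · rintro (⟨h, _⟩ | ⟨h, _⟩) <;> exact h
    · intro hx
      have hxR := (hCP.1 s hs).2 hx
      rcases hc x hxR with h | h
      · exact Or.inl ⟨hx, hxR, h⟩
      · exact Or.inr ⟨hx, hxR, h⟩
  have hdisj : Disjoint (s ∩ R.filter (fun r => c r = Colour.red))
      (s ∩ R.filter (fun r => c r = Colour.blue)) := by
    rw [Finset.disjoint_left]
    rintro a ha1 ha2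
    have hra := (Finset.mem_filter.mp (Finset.mem_inter.mp ha1).2).2
    have hba := (Finset.mem_filter.mp (Finset.mem_inter.mp ha2).2).2
    rw [hra] at hba
    exact Colour.noConfusion hba
  have : s.card = (s ∩ R.filter (fun r => c r = Colour.red)).card +
      (s ∩ R.filter (fun r => c r = Colour.blue)).card := by
    rw [← Finset.card_union_of_disjoint hdisj, hunion]
  rw [this]
  exact Even.add he1 he2
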